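/- Let d ≥ 1 and let V satisfy Assumption (A). Let φ be the Hamiltonian flow of p. Then for every T > 0 and every integer k ≥ 1 there exists C_{k,T} > 0 such that for every smooth function a : ℝ^{2d} → ℂ all of whose derivatives of order 1, …, k are bounded and every t ∈ [−T, T]: sup_ρ ‖D^k (a ∘ φ^t)(ρ)‖ ≤ C_{k,T} · max_{1 ≤ j ≤ k} sup_ρ ‖D^j a(ρ)‖. -/

import Mathlib

open Real MeasureTheory

noncomputable section

abbrev E (d : ℕ) := EuclideanSpace ℝ (Fin d)

/-- Assumption (A): `V` is smooth, nonnegative, comparable to `⟨x⟩^{2m}` with `m ∈ (0,1]`,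
with derivative bounds `‖D^k V(x)‖ ≤ C_k ⟨x⟩^{2m-k}`. Here `⟨x⟩^s = (1+‖x‖²)^{s/2}`. -/
def AssumptionA {d : ℕ} (V : E d → ℝ) (m : ℝ) : Prop :=
  ContDiff ℝ (⊤ : ℕ∞) V ∧ (∀ x, 0 ≤ V x) ∧ 0 < m ∧ m ≤ 1 ∧
  (∃ C > 0, ∀ x : E d, C⁻¹ * (1 + ‖x‖ ^ 2) ^ m - C ≤ V x ∧ V x ≤ C * (1 + ‖x‖ ^ 2) ^ m) ∧
  (∀ k : ℕ, ∃ Ck > 0, ∀ x : E d,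
    ‖iteratedFDeriv ℝ k V x‖ ≤ Ck * (1 + ‖x‖ ^ 2) ^ (m - (k : ℝ) / 2))

/-- The classical Hamiltonian `p(x,ξ) = ½|ξ|² + V(x)`. -/
def ham {d : ℕ} (V : E d → ℝ) (ρ : E d × E d) : ℝ := (1 / 2) * ‖ρ.2‖ ^ 2 + V ρ.1

/-- The Hamiltonian flow of `p`: smooth in `(t,ρ)`, `φ⁰ = id`, and
`d/dt φᵗ(x,ξ) = (ξᵗ, -∇V(xᵗ))`. -/
def IsHamFlow {d : ℕ} (V : E d → ℝ) (φ : ℝ → E d × E d → E d × E d) : Prop :=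
  ContDiff ℝ (⊤ : ℕ∞) (fun q : ℝ × (E d × E d) => φ q.1 q.2) ∧
  (∀ ρ, φ 0 ρ = ρ) ∧
  (∀ t ρ, HasDerivAt (fun s => φ s ρ) ((φ t ρ).2, -(gradient V (φ t ρ).1)) t)

/-! ### Auxiliary lemmas -/

lemma clm_iteratedFDeriv_norm_le {X Y : Type*} [NormedAddCommGroup X] [NormedSpace ℝ X]
    [NormedAddCommGroup Y] [NormedSpace ℝ Y] (e : X →L[ℝ] Y) {i : ℕ} (hi : 1 ≤ i) (x : X) :
    ‖iteratedFDeriv ℝ i (⇑e) x‖ ≤ ‖e‖ := by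
  obtain ⟨n, rfl⟩ : ∃ n, i = n + 1 := ⟨i - 1, by omega⟩
  have h1 : (fderiv ℝ (⇑e)) = fun _ : X => e := funext fun y => e.fderiv
  rw [← norm_iteratedFDeriv_fderiv, h1]
  cases n with
  | zero => rw [norm_iteratedFDeriv_zero]
  | succ p =>
      rw [iteratedFDeriv_const_of_ne (Nat.succ_ne_zero p)]
      simp

lemma norm_fderiv_eq_iteratedFDeriv_one {X Y : Type*} [NormedAddCommGroup X] [NormedSpace ℝ X]
    [NormedAddCommGroup Y] [NormedSpace ℝ Y] (f : X → Y) (x : X) :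
    ‖fderiv ℝ f x‖ = ‖iteratedFDeriv ℝ 1 f x‖ := by
  rw [← norm_iteratedFDeriv_fderiv (n := 0), norm_iteratedFDeriv_zero]

/-- Swap of the `t`-derivative and the `fderiv` in `ρ` for a jointly smooth map. -/
theorem swap_deriv_fderiv {P W : Type*} [NormedAddCommGroup P] [NormedSpace ℝ P]
    [NormedAddCommGroup W] [NormedSpace ℝ W]
    {H : ℝ × P → W} (hH : ContDiff ℝ (⊤ : ℕ∞) H)
    {G : ℝ × P → W} (hG : ∀ t ρ, HasDerivAt (fun s => H (s, ρ)) (G (t, ρ)) t)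
    (t : ℝ) (ρ : P) :
    HasDerivAt (fun s => fderiv ℝ (fun x => H (s, x)) ρ)
      (fderiv ℝ (fun x => G (t, x)) ρ) t := by
  have hd1 : Differentiable ℝ H := hH.differentiable (by simp)
  have hdfC : ContDiff ℝ (⊤ : ℕ∞) (fderiv ℝ H) := hH.fderiv_right (by simp)
  have hdf : Differentiable ℝ (fderiv ℝ H) := hdfC.differentiable (by simp)
  set A := fderiv ℝ (fderiv ℝ H) (t, ρ) with hA
  have hsymm : ∀ v w, A v w = A w v :=
    second_derivative_symmetric (f := H) (fun y => (hd1 y).hasFDerivAt)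
      ((hdf (t, ρ)).hasFDerivAt)
  have hcurve : ∀ (x : P) (s : ℝ), HasDerivAt (fun s' : ℝ => (s', x)) ((1:ℝ), (0:P)) s :=
    fun x s => (hasDerivAt_id s).prodMk (hasDerivAt_const s x)
  have hu : HasDerivAt (fun s => fderiv ℝ H (s, ρ)) (A ((1:ℝ), (0:P))) t :=
    (hdf (t, ρ)).hasFDerivAt.comp_hasDerivAt t (hcurve ρ t)
  have hpartAt : ∀ (s : ℝ) (x : P), HasFDerivAt (fun z : P => H (s, z))
      ((fderiv ℝ H (s, x)).comp (ContinuousLinearMap.inr ℝ ℝ P)) x := by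
    intro s x
    exact (hd1 (s, x)).hasFDerivAt.comp x (hasFDerivAt_prodMk_right s x)
  have hpart : ∀ (s : ℝ), fderiv ℝ (fun z : P => H (s, z)) ρ
      = (fderiv ℝ H (s, ρ)).comp (ContinuousLinearMap.inr ℝ ℝ P) := fun s => (hpartAt s ρ).fderiv
  set Lc : ((ℝ × P) →L[ℝ] W) →L[ℝ] (P →L[ℝ] W) :=
    (ContinuousLinearMap.compL ℝ P (ℝ × P) W).flip (ContinuousLinearMap.inr ℝ ℝ P) with hLc
  have hu2 : HasDerivAt (fun s => Lc (fderiv ℝ H (s, ρ))) (Lc (A ((1:ℝ), (0:P)))) t :=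
    Lc.hasFDerivAt.comp_hasDerivAt t hu
  have hfun : (fun s => fderiv ℝ (fun x => H (s, x)) ρ) = fun s => Lc (fderiv ℝ H (s, ρ)) := by
    funext s
    rw [hpart s]
    rfl
  have hGeq : ∀ (s : ℝ) (x : P), G (s, x) = fderiv ℝ H (s, x) ((1:ℝ), (0:P)) := by
    intro s x
    have h2 : HasDerivAt (fun s' => H (s', x)) (fderiv ℝ H (s, x) ((1:ℝ), (0:P))) s :=
      (hd1 (s, x)).hasFDerivAt.comp_hasDerivAt s (hcurve x s)
    exact (hG s x).unique h2
  set e : ((ℝ × P) →L[ℝ] W) →L[ℝ] W := ContinuousLinearMap.apply ℝ W ((1:ℝ), (0:P)) with he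
  have hRd : HasFDerivAt (fun x : P => fderiv ℝ H (t, x))
      (A.comp (ContinuousLinearMap.inr ℝ ℝ P)) ρ :=
    (hdf (t, ρ)).hasFDerivAt.comp ρ (hasFDerivAt_prodMk_right t ρ)
  have hR : fderiv ℝ (fun x => G (t, x)) ρ = e.comp (A.comp (ContinuousLinearMap.inr ℝ ℝ P)) := by
    have h3 : (fun x => G (t, x)) = fun x => e (fderiv ℝ H (t, x)) := by
      funext x; rw [hGeq t x]; rfl
    rw [h3]
    exact (e.hasFDerivAt.comp ρ hRd).fderiv
  rw [hfun, hR]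
  have hfinal : Lc (A ((1:ℝ), (0:P))) = e.comp (A.comp (ContinuousLinearMap.inr ℝ ℝ P)) := by
    ext w
    show ((A ((1:ℝ), (0:P))).comp (ContinuousLinearMap.inr ℝ ℝ P)) w
      = e ((A.comp (ContinuousLinearMap.inr ℝ ℝ P)) w)
    simp only [ContinuousLinearMap.comp_apply, ContinuousLinearMap.inr_apply,
      ContinuousLinearMap.apply_apply]
    exact hsymm _ _
  exact hfinal ▸ hu2

/-- Smoothness and time-derivative of the iterated spatial derivatives of a flow. -/
theorem flow_iter {P : Type*} [NormedAddCommGroup P] [NormedSpace ℝ P]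
    (φ : ℝ → P → P) (hΦ : ContDiff ℝ (⊤ : ℕ∞) (fun q : ℝ × P => φ q.1 q.2))
    (f : P → P) (hf : ∀ t ρ, HasDerivAt (fun s => φ s ρ) (f (φ t ρ)) t) :
    ∀ j : ℕ, ContDiff ℝ (⊤ : ℕ∞) (fun q : ℝ × P => iteratedFDeriv ℝ j (φ q.1) q.2) ∧
      ∀ t ρ, HasDerivAt (fun s => iteratedFDeriv ℝ j (φ s) ρ)
        (iteratedFDeriv ℝ j (fun x => f (φ t x)) ρ) t := by
  intro j
  induction j with
  | zero =>
    set L := (continuousMultilinearCurryFin0 ℝ P P).symm.toLinearIsometry.toContinuousLinearMap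
      with hL
    have e0 : ∀ (g : P → P) (x : P), iteratedFDeriv ℝ 0 g x = L (g x) := fun g x => by
      rw [iteratedFDeriv_zero_eq_comp]; simp [L]
    constructor
    · have : (fun q : ℝ × P => iteratedFDeriv ℝ 0 (φ q.1) q.2) = fun q => L (φ q.1 q.2) :=
        funext fun q => e0 _ _
      rw [this]
      exact L.contDiff.comp hΦ
    · intro t ρ
      simp only [e0]
      exact L.hasFDerivAt.comp_hasDerivAt t (hf t ρ)
  | succ j IH =>
    obtain ⟨Sj, Dj⟩ := IH
    set L := (continuousMultilinearCurryLeftEquiv ℝ (fun _ : Fin (j + 1) => P)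
      P).symm.toLinearIsometry.toContinuousLinearMap with hL
    have esucc : ∀ (g : P → P) (x : P),
        iteratedFDeriv ℝ (j + 1) g x = L (fderiv ℝ (iteratedFDeriv ℝ j g) x) := fun g x => by
      rw [iteratedFDeriv_succ_eq_comp_left]; simp [L]
    have hF : ContDiff ℝ (⊤ : ℕ∞)
        (fun q : ℝ × P => fderiv ℝ (fun x => iteratedFDeriv ℝ j (φ q.1) x) q.2) := by
      exact ContDiff.fderiv
        (f := fun (q : ℝ × P) (x : P) => iteratedFDeriv ℝ j (φ q.1) x) (g := Prod.snd)
        (Sj.comp ((contDiff_fst.fst).prodMk contDiff_snd)) contDiff_snd (by simp)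
    constructor
    · have : (fun q : ℝ × P => iteratedFDeriv ℝ (j + 1) (φ q.1) q.2)
          = fun q => L (fderiv ℝ (iteratedFDeriv ℝ j (φ q.1)) q.2) := funext fun q => esucc _ _
      rw [this]
      exact L.contDiff.comp hF
    · intro t ρ
      have hswap := swap_deriv_fderiv (H := fun q : ℝ × P => iteratedFDeriv ℝ j (φ q.1) q.2) Sj
        (G := fun q : ℝ × P => iteratedFDeriv ℝ j (fun x => f (φ q.1 x)) q.2)
        (fun t' ρ' => Dj t' ρ') t ρ
      have h2 := L.hasFDerivAt.comp_hasDerivAt t hswap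
      have hfun2 : (⇑L ∘ fun s => fderiv ℝ (fun x => iteratedFDeriv ℝ j (φ s) x) ρ)
          = fun s => iteratedFDeriv ℝ (j + 1) (φ s) ρ := funext fun s => (esucc (φ s) ρ).symm
      have hder2 : L (fderiv ℝ (fun x => iteratedFDeriv ℝ j (fun y => f (φ t y)) x) ρ)
          = iteratedFDeriv ℝ (j + 1) (fun y => f (φ t y)) ρ := (esucc _ ρ).symm
      rw [hfun2, hder2] at h2
      exact h2

/-! ### The vector field of the Hamiltonian flow and its derivative bounds -/

section grad
variable {d : ℕ} {V : E d → ℝ} {m : ℝ}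

lemma gradient_def' (V : E d → ℝ) :
    gradient V = fun x => (InnerProductSpace.toDual ℝ (E d)).symm (fderiv ℝ V x) := rfl

lemma contDiff_gradient (hV : ContDiff ℝ (⊤ : ℕ∞) V) : ContDiff ℝ (⊤ : ℕ∞) (gradient V) := by
  rw [gradient_def']
  exact (InnerProductSpace.toDual ℝ (E d)).symm.contDiff.comp (hV.fderiv_right (by simp))

lemma norm_iteratedFDeriv_gradient (l : ℕ) (y : E d) :
    ‖iteratedFDeriv ℝ l (gradient V) y‖ = ‖iteratedFDeriv ℝ (l + 1) V y‖ := by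
  rw [← norm_iteratedFDeriv_fderiv]
  rw [gradient_def']
  exact (InnerProductSpace.toDual ℝ (E d)).symm.norm_iteratedFDeriv_comp_left _ y l

lemma grad_bound (hV : AssumptionA V m) (l : ℕ) (hl : 1 ≤ l) :
    ∃ K > 0, ∀ y : E d, ‖iteratedFDeriv ℝ l (gradient V) y‖ ≤ K := by
  obtain ⟨hVs, _, hm0, hm1, _, hCk⟩ := hV
  obtain ⟨Ck, hCk0, hCkb⟩ := hCk (l + 1)
  refine ⟨Ck, hCk0, fun y => ?_⟩
  rw [norm_iteratedFDeriv_gradient]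
  refine (hCkb y).trans ?_
  have h1 : (1 + ‖y‖ ^ 2 : ℝ) ^ (m - (l + 1 : ℕ) / 2 : ℝ) ≤ 1 := by
    apply Real.rpow_le_one_of_one_le_of_nonpos
    · nlinarith [sq_nonneg ‖y‖]
    · have : (1 : ℝ) ≤ l := by exact_mod_cast hl
      push_cast
      linarith
  nlinarith

lemma grad_bound_upto (hV : AssumptionA V m) (i : ℕ) :
    ∃ K > 0, ∀ l, 1 ≤ l → l ≤ i → ∀ y : E d, ‖iteratedFDeriv ℝ l (gradient V) y‖ ≤ K := by
  induction i with
  | zero => exact ⟨1, one_pos, by omega⟩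
  | succ n ih =>
    obtain ⟨K, hK, hKb⟩ := ih
    obtain ⟨K', hK', hK'b⟩ := grad_bound hV (n + 1) (by omega)
    refine ⟨max K K', lt_max_of_lt_left hK, fun l h1 h2 y => ?_⟩
    rcases Nat.lt_succ_iff_lt_or_eq.mp (Nat.lt_succ_of_le h2) with h | h
    · exact (hKb l h1 (by omega) y).trans (le_max_left _ _)
    · subst h; exact (hK'b y).trans (le_max_right _ _)

lemma gradfst_bound (hV : AssumptionA V m) (i : ℕ) (hi : 1 ≤ i) :
    ∃ K > 0, ∀ x : E d × E d, ‖iteratedFDeriv ℝ i (fun p : E d × E d => gradient V p.1) x‖ ≤ K := by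
  obtain ⟨C, hC0, hCb⟩ := grad_bound_upto hV i
  have hVs := hV.1
  have hgs : ContDiff ℝ (⊤ : ℕ∞) (gradient V) := contDiff_gradient hVs
  refine ⟨(i.factorial : ℝ) * C * 1 ^ i + 1, by positivity, fun x => ?_⟩
  set c : E d := gradient V x.1 with hc
  set g₀ : E d → E d := fun y => gradient V y - c with hg₀
  have hg₀s : ContDiff ℝ (⊤ : ℕ∞) g₀ := hgs.sub contDiff_const
  have hsplit : (fun p : E d × E d => gradient V p.1)
      = (g₀ ∘ Prod.fst) + (fun _ : E d × E d => c) := by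
    funext p; simp [g₀, Function.comp]
  have hadd : iteratedFDeriv ℝ i (fun p : E d × E d => gradient V p.1) x
      = iteratedFDeriv ℝ i (g₀ ∘ Prod.fst) x := by
    rw [hsplit, iteratedFDeriv_add_apply ((hg₀s.comp contDiff_fst).contDiffAt.of_le (by exact_mod_cast le_top))
      (contDiff_const.contDiffAt.of_le le_top), iteratedFDeriv_const_of_ne (by omega : i ≠ 0)]
    simp
  rw [hadd]
  have hcomp : ‖iteratedFDeriv ℝ i (g₀ ∘ Prod.fst) x‖ ≤ (i.factorial : ℝ) * C * 1 ^ i := by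
    apply norm_iteratedFDeriv_comp_le hg₀s contDiff_fst (by exact_mod_cast le_top) x
    · intro l hl
      rcases Nat.eq_zero_or_pos l with h | h
      · subst h
        rw [norm_iteratedFDeriv_zero]
        simp [g₀]
        simp [hc, le_of_lt hC0]
      · have : iteratedFDeriv ℝ l g₀ (Prod.fst x) = iteratedFDeriv ℝ l (gradient V) x.1 := by
          have hg' : g₀ = gradient V + fun _ : E d => -c := by
            funext y; simp only [g₀, Pi.add_apply, sub_eq_add_neg]
          rw [hg', iteratedFDeriv_add_apply (hgs.contDiffAt.of_le (by exact_mod_cast le_top)) (contDiff_const.contDiffAt.of_le le_top),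
            iteratedFDeriv_const_of_ne (by omega : l ≠ 0)]
          simp
        rw [this]
        exact hCb l h hl x.1
    · intro l hl1 hl2
      rw [one_pow]
      have : (Prod.fst : E d × E d → E d)
          = ⇑(ContinuousLinearMap.fst ℝ (E d) (E d)) := rfl
      rw [this]
      exact (clm_iteratedFDeriv_norm_le _ hl1 x).trans (ContinuousLinearMap.norm_fst_le ℝ (E d) (E d))
  exact hcomp.trans (by linarith)

def fflow {d : ℕ} (V : E d → ℝ) (ρ : E d × E d) : E d × E d := (ρ.2, -gradient V ρ.1)

lemma contDiff_fflow (hVs : ContDiff ℝ (⊤ : ℕ∞) V) : ContDiff ℝ (⊤ : ℕ∞) (fflow V) :=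
  contDiff_snd.prodMk (((contDiff_gradient hVs).comp contDiff_fst).neg)

lemma fflow_bound (hV : AssumptionA V m) (i : ℕ) (hi : 1 ≤ i) :
    ∃ K > 0, ∀ x : E d × E d, ‖iteratedFDeriv ℝ i (fflow V) x‖ ≤ K := by
  obtain ⟨K, hK0, hKb⟩ := gradfst_bound hV i hi
  have hVs := hV.1
  set L₁ : (E d × E d) →L[ℝ] (E d × E d) :=
    (ContinuousLinearMap.inl ℝ (E d) (E d)).comp (ContinuousLinearMap.snd ℝ (E d) (E d)) with hL₁
  set J : (E d) →L[ℝ] (E d × E d) := -(ContinuousLinearMap.inr ℝ (E d) (E d)) with hJ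
  have hL₁n : ‖L₁‖ ≤ 1 := by
    apply ContinuousLinearMap.opNorm_le_bound _ zero_le_one
    intro x
    rw [one_mul]
    show ‖((x.2 : E d), (0 : E d))‖ ≤ ‖x‖
    rw [Prod.norm_def]
    simp only [norm_zero]
    exact max_le (norm_snd_le x) (norm_nonneg x)
  have hJn : ‖J‖ ≤ 1 := by
    rw [hJ, norm_neg]
    apply ContinuousLinearMap.opNorm_le_bound _ zero_le_one
    intro y
    rw [one_mul]
    show ‖((0 : E d), y)‖ ≤ ‖y‖
    rw [Prod.norm_def]
    simp
  set g : E d × E d → E d := fun p => gradient V p.1 with hg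
  have hgs : ContDiff ℝ (⊤ : ℕ∞) g := (contDiff_gradient hVs).comp contDiff_fst
  have hsplit : fflow V = ⇑L₁ + (⇑J ∘ g) := by
    funext x
    simp only [fflow, Pi.add_apply, Function.comp_apply, hL₁, hJ, hg,
      ContinuousLinearMap.comp_apply, ContinuousLinearMap.coe_snd',
      ContinuousLinearMap.inl_apply, ContinuousLinearMap.neg_apply,
      ContinuousLinearMap.inr_apply, Prod.neg_mk, Prod.mk_add_mk, add_zero, zero_add, neg_zero]
  refine ⟨1 + K, by positivity, fun x => ?_⟩
  rw [hsplit, iteratedFDeriv_add_apply (L₁.contDiff.contDiffAt.of_le le_top)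
    ((J.contDiff.comp hgs).contDiffAt.of_le (by exact_mod_cast le_top))]
  refine (norm_add_le _ _).trans ?_
  have h1 : ‖iteratedFDeriv ℝ i (⇑L₁) x‖ ≤ 1 := (clm_iteratedFDeriv_norm_le L₁ hi x).trans hL₁n
  have h2 : ‖iteratedFDeriv ℝ i (⇑J ∘ g) x‖ ≤ K := by
    rw [J.iteratedFDeriv_comp_left (hgs.contDiffAt (x := x)) (by exact_mod_cast le_top)]
    refine (J.norm_compContinuousMultilinearMap_le _).trans ?_
    calc ‖J‖ * ‖iteratedFDeriv ℝ i g x‖ ≤ 1 * K :=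
      mul_le_mul hJn (hKb x) (norm_nonneg _) zero_le_one
    _ = K := one_mul K
  linarith

/-! ### Uniform bounds on derivatives of the flow via Gronwall -/

set_option maxHeartbeats 2000000 in
lemma flow_deriv_bound (hV : AssumptionA V m)
    {φ : ℝ → E d × E d → E d × E d} (hφ : IsHamFlow V φ) {T : ℝ} (hT : 0 < T) :
    ∀ j : ℕ, 1 ≤ j → ∃ D > 0, ∀ t ∈ Set.Icc (-T) T, ∀ ρ : E d × E d,
      ‖iteratedFDeriv ℝ j (φ t) ρ‖ ≤ D := by
  have hVs : ContDiff ℝ (⊤ : ℕ∞) V := hV.1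
  have hΦ := hφ.1
  have hflow : ∀ t ρ, HasDerivAt (fun s => φ s ρ) (fflow V (φ t ρ)) t := hφ.2.2
  have hFI := flow_iter φ hΦ (fflow V) hflow
  have hφt : ∀ t, ContDiff ℝ (⊤ : ℕ∞) (φ t) := fun t =>
    hΦ.comp ((contDiff_const (c := t)).prodMk contDiff_id)
  have hfs : ContDiff ℝ (⊤ : ℕ∞) (fflow V) := contDiff_fflow hVs
  have hfd : ContDiff ℝ (⊤ : ℕ∞) (fderiv ℝ (fflow V)) := hfs.fderiv_right (by simp)
  intro j
  induction j using Nat.strong_induction_on with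
  | _ j IH =>
  intro hj
  obtain ⟨n, rfl⟩ : ∃ n, j = n + 1 := ⟨j - 1, by omega⟩
  -- uniform bound from the induction hypothesis, up to order `n`
  have IH1 : ∀ nn, nn ≤ n → ∃ Dm ≥ (1:ℝ), ∀ l, 1 ≤ l → l ≤ nn → ∀ t ∈ Set.Icc (-T) T,
      ∀ ρ : E d × E d, ‖iteratedFDeriv ℝ l (φ t) ρ‖ ≤ Dm := by
    intro nn hnn
    induction nn with
    | zero => exact ⟨1, le_rfl, fun l h1 h2 => absurd (h1.trans h2) (by norm_num)⟩
    | succ p ihp =>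
      obtain ⟨Dm, hDm, hDmb⟩ := ihp (by omega)
      obtain ⟨D', hD', hD'b⟩ := IH (p + 1) (by omega) (by omega)
      refine ⟨max Dm D', le_trans hDm (le_max_left _ _), fun l h1 h2 t ht ρ => ?_⟩
      rcases Nat.lt_succ_iff_lt_or_eq.mp (Nat.lt_succ_of_le h2) with h | h
      · exact (hDmb l h1 (by omega) t ht ρ).trans (le_max_left _ _)
      · subst h; exact (hD'b t ht ρ).trans (le_max_right _ _)
  obtain ⟨Dm, hDm1, hDmb⟩ := IH1 n le_rfl
  -- uniform bound on derivatives of `fflow` up to order `n+1`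
  have hf1 : ∀ nn : ℕ, ∃ K ≥ (1:ℝ), (∀ x, ‖fderiv ℝ (fflow V) x‖ ≤ K) ∧ ∀ i, 1 ≤ i → i ≤ nn →
      ∀ x : E d × E d, ‖iteratedFDeriv ℝ i (fflow V) x‖ ≤ K := by
    intro nn
    induction nn with
    | zero =>
      obtain ⟨K, hK, hKb⟩ := fflow_bound hV 1 le_rfl
      refine ⟨max K 1, le_max_right _ _, fun x => ?_,
        fun i h1 h2 x => absurd (h1.trans h2) (by norm_num)⟩
      rw [norm_fderiv_eq_iteratedFDeriv_one]
      exact (hKb x).trans (le_max_left _ _)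
    | succ p ihp =>
      obtain ⟨K, hK, hK0, hKb⟩ := ihp
      obtain ⟨K', hK', hK'b⟩ := fflow_bound hV (p + 1) (by omega)
      refine ⟨max K K', le_trans hK (le_max_left _ _), fun x => (hK0 x).trans (le_max_left _ _),
        fun i h1 h2 x => ?_⟩
      rcases Nat.lt_succ_iff_lt_or_eq.mp (Nat.lt_succ_of_le h2) with h | h
      · exact (hKb i h1 (by omega) x).trans (le_max_left _ _)
      · subst h; exact (hK'b x).trans (le_max_right _ _)
  obtain ⟨K, hK1, hKfd, hKb⟩ := hf1 (n + 1)
  have hK0 : (0:ℝ) < K := lt_of_lt_of_le one_pos hK1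
  set Bj : ℝ := (2:ℝ) ^ n * ((n.factorial : ℝ) * K * Dm ^ n * Dm ^ n) with hBj
  have hDm0 : (0:ℝ) < Dm := lt_of_lt_of_le one_pos hDm1
  have hBj0 : 0 ≤ Bj := by positivity
  have hder : ∀ (s : ℝ) (ρ : E d × E d),
      HasDerivAt (fun r => iteratedFDeriv ℝ (n+1) (φ r) ρ)
        (iteratedFDeriv ℝ (n+1) (fun x => fflow V (φ s x)) ρ) s :=
    fun s ρ => (hFI (n+1)).2 s ρ
  -- the key pointwise estimate
  have hest : ∀ s ∈ Set.Icc (-T) T, ∀ ρ : E d × E d,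
      ‖iteratedFDeriv ℝ (n+1) (fun x => fflow V (φ s x)) ρ‖
        ≤ K * ‖iteratedFDeriv ℝ (n+1) (φ s) ρ‖ + Bj := by
    intro s hs ρ
    set g := φ s with hgdef
    have hgs : ContDiff ℝ (⊤ : ℕ∞) g := hφt s
    have hcompeq : (fun x => fflow V (g x)) = fflow V ∘ g := rfl
    have hfderiv_eq : fderiv ℝ (fflow V ∘ g)
        = fun y => (ContinuousLinearMap.compL ℝ (E d × E d) (E d × E d) (E d × E d))
            (fderiv ℝ (fflow V) (g y)) (fderiv ℝ g y) := by
      funext y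
      rw [ContinuousLinearMap.compL_apply]
      exact fderiv_comp y (hfs.differentiable (by simp) (g y)) (hgs.differentiable (by simp) y)
    rw [hcompeq, ← norm_iteratedFDeriv_fderiv, hfderiv_eq]
    have hu : ContDiff ℝ (⊤ : ℕ∞) (fun y => fderiv ℝ (fflow V) (g y)) := hfd.comp hgs
    have hv : ContDiff ℝ (⊤ : ℕ∞) (fderiv ℝ g) := hgs.fderiv_right (by simp)
    have hbil := (ContinuousLinearMap.compL ℝ (E d × E d) (E d × E d)
      (E d × E d)).norm_iteratedFDeriv_le_of_bilinear_of_le_one hu hv ρ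
      (show (n : WithTop ℕ∞) ≤ ((⊤ : ℕ∞) : WithTop ℕ∞) by exact_mod_cast le_top) (ContinuousLinearMap.norm_compL_le _ _ _ _)
    refine hbil.trans ?_
    rw [Finset.sum_range_succ']
    set A' : ℝ := (n.factorial : ℝ) * K * Dm ^ n * Dm ^ n with hA'
    have hA'0 : 0 ≤ A' := by positivity
    -- the top term
    have h0 : ((n.choose 0 : ℕ) : ℝ)
          * ‖iteratedFDeriv ℝ 0 (fun y => fderiv ℝ (fflow V) (g y)) ρ‖
          * ‖iteratedFDeriv ℝ (n - 0) (fderiv ℝ g) ρ‖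
        ≤ K * ‖iteratedFDeriv ℝ (n+1) g ρ‖ := by
      rw [Nat.choose_zero_right, Nat.cast_one, one_mul, norm_iteratedFDeriv_zero, Nat.sub_zero,
        norm_iteratedFDeriv_fderiv]
      exact mul_le_mul_of_nonneg_right (hKfd (g ρ)) (norm_nonneg _)
    -- the lower-order terms
    have hterm : ∀ i ∈ Finset.range n, ((n.choose (i+1) : ℕ) : ℝ)
          * ‖iteratedFDeriv ℝ (i+1) (fun y => fderiv ℝ (fflow V) (g y)) ρ‖
          * ‖iteratedFDeriv ℝ (n - (i+1)) (fderiv ℝ g) ρ‖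
        ≤ ((n.choose (i+1) : ℕ) : ℝ) * A' := by
      intro i hi
      have hin : i + 1 ≤ n := Finset.mem_range.mp hi
      have hn1 : 1 ≤ n := le_trans (by omega) hin
      have hmid : ‖iteratedFDeriv ℝ (i+1) (fun y => fderiv ℝ (fflow V) (g y)) ρ‖
          ≤ ((i+1).factorial : ℝ) * K * Dm ^ (i+1) := by
        show ‖iteratedFDeriv ℝ (i+1) ((fderiv ℝ (fflow V)) ∘ g) ρ‖ ≤ _
        apply norm_iteratedFDeriv_comp_le hfd hgs (by exact_mod_cast le_top) ρ
        · intro l hl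
          rcases Nat.eq_zero_or_pos l with h | h
          · subst h; rw [norm_iteratedFDeriv_zero]; exact hKfd (g ρ)
          · rw [norm_iteratedFDeriv_fderiv]
            exact hKb (l+1) (by omega) (by omega) (g ρ)
        · intro l h1 h2
          exact (hDmb l h1 (by omega) s hs ρ).trans (le_self_pow₀ hDm1 (by omega))
      have hmid2 : ((i+1).factorial : ℝ) * K * Dm ^ (i+1) ≤ (n.factorial : ℝ) * K * Dm ^ n := by
        have hf : ((i+1).factorial : ℝ) ≤ (n.factorial : ℝ) := by
          exact_mod_cast Nat.factorial_le hin
        have hp : Dm ^ (i+1) ≤ Dm ^ n := pow_le_pow_right₀ hDm1 hin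
        have h1 : (0:ℝ) ≤ K := le_of_lt hK0
        have h2 : (0:ℝ) ≤ Dm ^ (i+1) := by positivity
        have hA0 : (0:ℝ) ≤ (n.factorial : ℝ) * K := by positivity
        calc ((i+1).factorial : ℝ) * K * Dm ^ (i+1)
            ≤ (n.factorial : ℝ) * K * Dm ^ (i+1) :=
              mul_le_mul_of_nonneg_right (mul_le_mul_of_nonneg_right hf h1) h2
          _ = (n.factorial : ℝ) * K * Dm ^ (i+1) := rfl
          _ ≤ (n.factorial : ℝ) * K * Dm ^ n := by
              rw [mul_assoc, mul_assoc]
              exact mul_le_mul_of_nonneg_left (mul_le_mul_of_nonneg_left hp h1) (by positivity)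
      have hlast : ‖iteratedFDeriv ℝ (n - (i+1)) (fderiv ℝ g) ρ‖ ≤ Dm ^ n := by
        rw [norm_iteratedFDeriv_fderiv]
        have heq : n - (i+1) + 1 = n - i := by omega
        rw [heq]
        exact (hDmb (n - i) (by omega) (by omega) s hs ρ).trans (le_self_pow₀ hDm1 (by omega))
      calc ((n.choose (i+1) : ℕ) : ℝ)
            * ‖iteratedFDeriv ℝ (i+1) (fun y => fderiv ℝ (fflow V) (g y)) ρ‖
            * ‖iteratedFDeriv ℝ (n - (i+1)) (fderiv ℝ g) ρ‖
          ≤ ((n.choose (i+1) : ℕ) : ℝ) * ((n.factorial : ℝ) * K * Dm ^ n) * (Dm ^ n) := by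
            have hmid3 := hmid.trans hmid2
            gcongr
        _ = ((n.choose (i+1) : ℕ) : ℝ) * A' := by rw [hA']; ring
    have hsum : ∑ i ∈ Finset.range n, ((n.choose (i+1) : ℕ) : ℝ)
          * ‖iteratedFDeriv ℝ (i+1) (fun y => fderiv ℝ (fflow V) (g y)) ρ‖
          * ‖iteratedFDeriv ℝ (n - (i+1)) (fderiv ℝ g) ρ‖ ≤ Bj := by
      refine (Finset.sum_le_sum hterm).trans ?_
      rw [← Finset.sum_mul]
      have hchoose : (∑ i ∈ Finset.range n, ((n.choose (i+1) : ℕ) : ℝ)) ≤ (2:ℝ) ^ n := by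
        have h1 : (∑ i ∈ Finset.range n, n.choose (i+1)) ≤ ∑ i ∈ Finset.range (n+1), n.choose i := by
          rw [Finset.sum_range_succ']
          exact Nat.le_add_right _ _
        have h2 : ∑ i ∈ Finset.range (n+1), n.choose i = 2 ^ n := Nat.sum_range_choose n
        have := h1.trans_eq h2
        push_cast
        exact_mod_cast this
      calc (∑ i ∈ Finset.range n, ((n.choose (i+1) : ℕ) : ℝ)) * A' ≤ (2:ℝ) ^ n * A' := by
            exact mul_le_mul_of_nonneg_right hchoose hA'0
        _ = Bj := by rw [hBj, hA']
    calc (∑ i ∈ Finset.range n, ((n.choose (i+1) : ℕ) : ℝ)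
          * ‖iteratedFDeriv ℝ (i+1) (fun y => fderiv ℝ (fflow V) (g y)) ρ‖
          * ‖iteratedFDeriv ℝ (n - (i+1)) (fderiv ℝ g) ρ‖)
          + ((n.choose 0 : ℕ) : ℝ)
            * ‖iteratedFDeriv ℝ 0 (fun y => fderiv ℝ (fflow V) (g y)) ρ‖
            * ‖iteratedFDeriv ℝ (n - 0) (fderiv ℝ g) ρ‖
        ≤ Bj + K * ‖iteratedFDeriv ℝ (n+1) g ρ‖ := add_le_add hsum h0
      _ = K * ‖iteratedFDeriv ℝ (n+1) g ρ‖ + Bj := by ring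
  -- Gronwall, forward and backward
  set D : ℝ := Real.exp (K * T) * (1 + Bj / K) with hD
  have hDpos : 0 < D := by positivity
  refine ⟨D, hDpos, ?_⟩
  intro t ht ρ
  set c : ℝ → ContinuousMultilinearMap ℝ (fun _ : Fin (n+1) => E d × E d) (E d × E d) :=
    fun r => iteratedFDeriv ℝ (n+1) (φ r) ρ with hc
  have hc0 : ‖c 0‖ ≤ 1 := by
    have hid : (φ 0) = ⇑(ContinuousLinearMap.id ℝ (E d × E d)) := by
      funext ρ'; rw [hφ.2.1 ρ']; rfl
    have h2 : c 0 = iteratedFDeriv ℝ (n+1) (⇑(ContinuousLinearMap.id ℝ (E d × E d))) ρ := by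
      show iteratedFDeriv ℝ (n+1) (φ 0) ρ = _
      rw [hid]
    rw [h2]
    exact (clm_iteratedFDeriv_norm_le _ (by omega) ρ).trans ContinuousLinearMap.norm_id_le
  have fwd : ∀ x ∈ Set.Icc (0:ℝ) T, ‖c x‖ ≤ gronwallBound 1 K Bj x := by
    intro x hx
    have h := norm_le_gronwallBound_of_norm_deriv_right_le (f := c)
      (f' := fun s => iteratedFDeriv ℝ (n+1) (fun y => fflow V (φ s y)) ρ)
      (δ := 1) (K := K) (ε := Bj) (a := 0) (b := T)
      (fun s _ => ((hder s ρ).continuousAt).continuousWithinAt)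
      (fun s _ => (hder s ρ).hasDerivWithinAt)
      hc0
      (fun s hs => hest s ⟨by linarith [hs.1], le_of_lt hs.2⟩ ρ)
      x hx
    simpa using h
  have bwd : ∀ x ∈ Set.Icc (0:ℝ) T, ‖c (-x)‖ ≤ gronwallBound 1 K Bj x := by
    intro x hx
    have hder' : ∀ s : ℝ, HasDerivAt (fun r => c (-r))
        ((-1 : ℝ) • iteratedFDeriv ℝ (n+1) (fun y => fflow V (φ (-s) y)) ρ) s := by
      intro s
      have h1 : HasDerivAt (fun r : ℝ => -r) (-1 : ℝ) s := (hasDerivAt_id s).neg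
      exact (hder (-s) ρ).scomp s h1
    have h := norm_le_gronwallBound_of_norm_deriv_right_le (f := fun r => c (-r))
      (f' := fun s => (-1 : ℝ) • iteratedFDeriv ℝ (n+1) (fun y => fflow V (φ (-s) y)) ρ)
      (δ := 1) (K := K) (ε := Bj) (a := 0) (b := T)
      (fun s _ => (hder' s).continuousAt.continuousWithinAt)
      (fun s _ => (hder' s).hasDerivWithinAt)
      (by simpa using hc0)
      (fun s hs => by
        have h := hest (-s) ⟨by linarith [hs.2], by linarith [hs.1]⟩ ρ
        simpa [norm_smul, hc] using h)
      x hx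
    simpa using h
  have hgb : ∀ x ∈ Set.Icc (0:ℝ) T, gronwallBound 1 K Bj x ≤ D := by
    intro x hx
    have hkx : K * x ≤ K * T := mul_le_mul_of_nonneg_left hx.2 (le_of_lt hK0)
    have h1 : Real.exp (K * x) ≤ Real.exp (K * T) := Real.exp_le_exp.mpr hkx
    have h2 : (0:ℝ) ≤ Bj / K := by positivity
    have h3 : (0:ℝ) < Real.exp (K * x) := Real.exp_pos _
    have h4 := Real.exp_pos (K * T)
    rw [gronwallBound_of_K_ne_0 (ne_of_gt hK0), hD]
    nlinarith [h1, h2, h3, h4]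
  rcases le_total 0 t with h | h
  · exact (fwd t ⟨h, ht.2⟩).trans (hgb t ⟨h, ht.2⟩)
  · have h1 := bwd (-t) ⟨by linarith, by linarith [ht.1]⟩
    have h2 := hgb (-t) ⟨by linarith, by linarith [ht.1]⟩
    rw [neg_neg] at h1
    exact h1.trans h2

end grad

/-- Derivative bounds for compositions with the flow: if all derivatives of `a` of
order `1,…,k` are bounded by `M`, then `‖D^k (a ∘ φᵗ)‖ ≤ C_{k,T} M` for `t ∈ [-T,T]`. -/
theorem stmt_5 (d : ℕ) (hd : 1 ≤ d) (V : E d → ℝ) (m : ℝ) (hV : AssumptionA V m)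
    (φ : ℝ → E d × E d → E d × E d) (hφ : IsHamFlow V φ)
    (T : ℝ) (hT : 0 < T) (k : ℕ) (hk : 1 ≤ k) :
    ∃ C > 0, ∀ a : E d × E d → ℂ, ContDiff ℝ (⊤ : ℕ∞) a → ∀ M : ℝ,
      (∀ j : ℕ, 1 ≤ j → j ≤ k → ∀ ρ : E d × E d, ‖iteratedFDeriv ℝ j a ρ‖ ≤ M) →
      ∀ t ∈ Set.Icc (-T) T, ∀ ρ : E d × E d,
        ‖iteratedFDeriv ℝ k (fun σ => a (φ t σ)) ρ‖ ≤ C * M := by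
  have hΦ := hφ.1
  have hφt : ∀ t, ContDiff ℝ (⊤ : ℕ∞) (φ t) := fun t =>
    hΦ.comp ((contDiff_const (c := t)).prodMk contDiff_id)
  -- uniform bounds on the derivatives of the flow up to order `k`
  have hDall : ∀ nn : ℕ, ∃ Dk ≥ (1:ℝ), ∀ i, 1 ≤ i → i ≤ nn → ∀ t ∈ Set.Icc (-T) T,
      ∀ ρ : E d × E d, ‖iteratedFDeriv ℝ i (φ t) ρ‖ ≤ Dk := by
    intro nn
    induction nn with
    | zero => exact ⟨1, le_rfl, fun i h1 h2 => absurd (h1.trans h2) (by norm_num)⟩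
    | succ p ihp =>
      obtain ⟨Dk, hDk, hDkb⟩ := ihp
      obtain ⟨D', hD', hD'b⟩ := flow_deriv_bound hV hφ hT (p + 1) (by omega)
      refine ⟨max Dk D', le_trans hDk (le_max_left _ _), fun i h1 h2 t ht ρ => ?_⟩
      rcases Nat.lt_succ_iff_lt_or_eq.mp (Nat.lt_succ_of_le h2) with h | h
      · exact (hDkb i h1 (by omega) t ht ρ).trans (le_max_left _ _)
      · subst h; exact (hD'b t ht ρ).trans (le_max_right _ _)
  obtain ⟨Dk, hDk1, hDkb⟩ := hDall k
  have hDk0 : (0:ℝ) < Dk := lt_of_lt_of_le one_pos hDk1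
  refine ⟨(k.factorial : ℝ) * Dk ^ k, by positivity, ?_⟩
  intro a ha M hM t ht ρ
  have hM0 : 0 ≤ M := le_trans (norm_nonneg _) (hM 1 le_rfl hk 0)
  set c : ℂ := a (φ t ρ) with hcdef
  set b : (E d × E d) → ℂ := fun σ => a σ - c with hbdef
  have hbs : ContDiff ℝ (⊤ : ℕ∞) b := ha.sub contDiff_const
  have hbeq : b = a + fun _ => -c := by
    funext σ; simp only [hbdef, Pi.add_apply, sub_eq_add_neg]
  have hbder : ∀ i, i ≠ 0 → ∀ σ, iteratedFDeriv ℝ i b σ = iteratedFDeriv ℝ i a σ := by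
    intro i hi σ
    rw [hbeq, iteratedFDeriv_add_apply (ha.contDiffAt.of_le (by exact_mod_cast le_top)) (contDiff_const.contDiffAt.of_le le_top),
      iteratedFDeriv_const_of_ne hi]
    simp
  have hcomp_eq : iteratedFDeriv ℝ k (fun σ => a (φ t σ)) ρ
      = iteratedFDeriv ℝ k (b ∘ φ t) ρ := by
    have h1 : (fun σ => a (φ t σ)) = (b ∘ φ t) + fun _ => c := by
      funext σ; simp [hbdef, Function.comp]
    rw [h1, iteratedFDeriv_add_apply ((hbs.comp (hφt t)).contDiffAt.of_le (by exact_mod_cast le_top))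
      (contDiff_const.contDiffAt.of_le le_top), iteratedFDeriv_const_of_ne (by omega : k ≠ 0)]
    simp
  rw [hcomp_eq]
  have hbound : ‖iteratedFDeriv ℝ k (b ∘ φ t) ρ‖ ≤ (k.factorial : ℝ) * M * Dk ^ k := by
    apply norm_iteratedFDeriv_comp_le hbs (hφt t) (by exact_mod_cast le_top) ρ
    · intro i hi
      rcases Nat.eq_zero_or_pos i with h | h
      · subst h
        rw [norm_iteratedFDeriv_zero]
        simp [hbdef]
        simp [hcdef, hM0]
      · rw [hbder i (by omega) (φ t ρ)]
        exact hM i h hi (φ t ρ)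
    · intro i h1 h2
      exact (hDkb i h1 h2 t ht ρ).trans (le_self_pow₀ hDk1 (by omega))
  refine hbound.trans (le_of_eq (by ring))

end
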